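/- arXiv:1502.05532 — 2 statements merged into one kernel-verified Lean document; each statement's English description precedes it below -/
import Mathlib

section
/- Every finite two-player zero-sum game admits a saddle point in mixed strategies: for any payoff matrix A : Fin m → Fin n → ℝ with m, n ≥ 1, there exist mixed strategies Φ* in the standard simplex of ℝ^m and Θ* in the standard simplex of ℝ^n such that J(Φ,Θ*) ≤ J(Φ*,Θ*) ≤ J(Φ*,Θ) for all mixed strategies Φ and Θ. -/
/-!
The payoff `J A Φ Θ` is a bilinear form in the two strategies, hence continuous and affine in
each of them, and the strategy sets are nonempty compact convex simplices. Von Neumann's minimax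
theorem, i.e. Sion's theorem specialised to separately continuous bilinear forms, then yields a
saddle point.
-/

open Finset

/-- Defender's expected payoff in the finite zero-sum game with matrix `A`. -/
def J {m n : ℕ} (A : Fin m → Fin n → ℝ) (Φ : Fin m → ℝ) (Θ : Fin n → ℝ) : ℝ :=
  ∑ j, ∑ i, Φ j * A j i * Θ i

theorem LinearMap.exists_isSaddlePointOn {E F : Type*}
    [TopologicalSpace E] [AddCommGroup E] [Module ℝ E] [IsTopologicalAddGroup E]
    [ContinuousSMul ℝ E]
    [TopologicalSpace F] [AddCommGroup F] [Module ℝ F] [IsTopologicalAddGroup F]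
    [ContinuousSMul ℝ F]
    (B : E →ₗ[ℝ] F →ₗ[ℝ] ℝ) (hB₁ : ∀ y, Continuous (B.flip y)) (hB₂ : ∀ x, Continuous (B x))
    {X : Set E} {Y : Set F} (hX₀ : X.Nonempty) (hXc : Convex ℝ X) (hXk : IsCompact X)
    (hY₀ : Y.Nonempty) (hYc : Convex ℝ Y) (hYk : IsCompact Y) :
    ∃ a ∈ X, ∃ b ∈ Y, IsSaddlePointOn X Y (fun x y => B x y) a b :=
  Sion.exists_isSaddlePointOn hX₀ hXc hXk
    (fun y _ => (hB₁ y).continuousOn.lowerSemicontinuousOn)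
    (fun y _ => ((B.flip y).convexOn hXc).quasiconvexOn) hYc hY₀ hYk
    (fun x _ => (hB₂ x).continuousOn.upperSemicontinuousOn)
    (fun x _ => ((B x).concaveOn hYc).quasiconcaveOn)

lemma J_eq_toLinearMap₂' {m n : ℕ} (A : Fin m → Fin n → ℝ) (Φ : Fin m → ℝ) (Θ : Fin n → ℝ) :
    J A Φ Θ = Matrix.toLinearMap₂' ℝ (Matrix.of A) Φ Θ := by
  simp [J, Matrix.toLinearMap₂'_apply', dotProduct, Matrix.mulVec, mul_sum, mul_assoc]

/-- Every finite two-player zero-sum game admits a saddle point in mixed strategies. -/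
theorem stmt2 {m n : ℕ} (hm : 1 ≤ m) (hn : 1 ≤ n) (A : Fin m → Fin n → ℝ) :
    ∃ Φs ∈ stdSimplex ℝ (Fin m), ∃ Θs ∈ stdSimplex ℝ (Fin n),
      (∀ Φ ∈ stdSimplex ℝ (Fin m), J A Φ Θs ≤ J A Φs Θs) ∧
      (∀ Θ ∈ stdSimplex ℝ (Fin n), J A Φs Θs ≤ J A Φs Θ) := by
  have hΔm : (stdSimplex ℝ (Fin m)).Nonempty := ⟨_, single_mem_stdSimplex ℝ ⟨0, hm⟩⟩
  have hΔn : (stdSimplex ℝ (Fin n)).Nonempty := ⟨_, single_mem_stdSimplex ℝ ⟨0, hn⟩⟩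
  -- The attacker minimizes `J`, so `Θ` is the first, minimizing, variable of the saddle point.
  obtain ⟨Θs, hΘs, Φs, hΦs, hsaddle⟩ :=
    (Matrix.toLinearMap₂' ℝ (Matrix.of A)).flip.exists_isSaddlePointOn
      (fun _ => LinearMap.continuous_of_finiteDimensional _)
      (fun _ => LinearMap.continuous_of_finiteDimensional _)
      hΔn (convex_stdSimplex ℝ _) (isCompact_stdSimplex ℝ _)
      hΔm (convex_stdSimplex ℝ _) (isCompact_stdSimplex ℝ _)
  simp only [LinearMap.flip_apply, ← J_eq_toLinearMap₂'] at hsaddle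
  exact ⟨Φs, hΦs, Θs, hΘs, fun Φ hΦ => hsaddle Θs hΘs Φ hΦ, fun Θ hΘ => hsaddle Θ hΘ Φs hΦs⟩
end

section
/- In a 2x2 control game, if ΔS(t) < ΔC, ΔS(t') < ΔC and ΔS(l) > 0, then the pure strategy pair (l, t) is a Nash equilibrium: the defender's payoff satisfies a_{lt} ≥ a_{l't}, and the attacker's payoff satisfies e_{lt} ≥ e_{lt'}. -/
/-!
2x2 control game.  `S j k`: expected security loss at level `j` (0 = l, 1 = l')
against target `k` (0 = t, 1 = t'); `C j`: indirect cost of level `j`.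
Defender payoff `a j k = S j k - C j`; attacker payoff `e j k = C j - S j k`.
ΔS(t) = S 1 0 - S 0 0, ΔS(t') = S 1 1 - S 0 1, ΔC = C 1 - C 0,
ΔS(l) = S 0 1 - S 0 0, ΔS(l') = S 1 1 - S 1 0.
-/
/-- If ΔS(t) < ΔC, ΔS(t') < ΔC and ΔS(l) > 0, then (l, t) is a pure Nash
equilibrium: a_{lt} ≥ a_{l't} and e_{lt} ≥ e_{lt'}. -/
theorem stmt10 (S : Fin 2 → Fin 2 → ℝ) (C : Fin 2 → ℝ)
    (h1 : S 1 0 - S 0 0 < C 1 - C 0) (h2 : S 1 1 - S 0 1 < C 1 - C 0)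
    (h3 : S 0 1 - S 0 0 > 0) :
    (S 0 0 - C 0 ≥ S 1 0 - C 1) ∧ (C 0 - S 0 0 ≥ C 0 - S 0 1) := by
  constructor <;> linarith
end
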